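/- Fictitious Space Lemma (matrix form): Let A be a symmetric positive definite n×n real matrix, Ã a symmetric positive definite m×m real matrix, and Π an n×m real matrix of rank n (i.e., the map ṽ ↦ Πṽ is surjective onto ℝⁿ). Assume there are constants c_Π > 0 and c_V > 0 such that (i) (Πṽ)ᵀ A (Πṽ) ≤ c_Π · ṽᵀ Ã ṽ for all ṽ ∈ ℝᵐ, and (ii) for every v ∈ ℝⁿ there exists ṽ ∈ ℝᵐ with Πṽ = v and ṽᵀ Ã ṽ ≤ c_V · vᵀ A v. Then for every v ∈ ℝⁿ, (1/c_V) · vᵀ A⁻¹ v ≤ vᵀ (Π Ã⁻¹ Πᵀ) v ≤ c_Π · vᵀ A⁻¹ v; in particular the spectral condition number of (Π Ã⁻¹ Πᵀ) A is at most c_Π · c_V. -/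

import Mathlib

/-!
Both bounds are Cauchy–Schwarz inequalities `(x ⬝ y)² ≤ (xᵀ M⁻¹ x) (yᵀ M y)`. For the upper bound
take `M = A`, `x = v`, `y = P tA⁻¹ Pᵀ v` and apply (i) to `tA⁻¹ Pᵀ v`, whose `tA`-energy is
`vᵀ (P tA⁻¹ Pᵀ) v`; for the lower bound take `M = tA`, `x = Pᵀ v` and `y` the lifting of `A⁻¹ v`
given by (ii). An eigenvector `x` of `(P tA⁻¹ Pᵀ) A` for `μ` gives `y = A x` with
`yᵀ (P tA⁻¹ Pᵀ) y = μ yᵀ A⁻¹ y`, so every eigenvalue lies in `[1 / c_V, c_P]`.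
-/

open Matrix

theorem le_mul_of_sq_le_mul_mul {a b c : ℝ} (ha : 0 ≤ a) (hb : 0 ≤ b) (hc : 0 ≤ c)
    (h : a ^ 2 ≤ b * (c * a)) : a ≤ c * b := by
  rcases ha.eq_or_lt with rfl | ha
  · positivity
  · exact le_of_mul_le_mul_right (by linarith) ha

namespace Matrix

variable {ι κ R : Type*} [Fintype ι] [Fintype κ]

theorem dotProduct_mulVec_eq_transpose_mulVec_dotProduct [CommSemiring R] (P : Matrix ι κ R)
    (v : ι → R) (w : κ → R) : v ⬝ᵥ (P *ᵥ w) = (Pᵀ *ᵥ v) ⬝ᵥ w := by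
  rw [dotProduct_mulVec, mulVec_transpose]

theorem IsSymm.dotProduct_mulVec_comm [CommSemiring R] {M : Matrix ι ι R} (hM : M.IsSymm)
    (x y : ι → R) : x ⬝ᵥ (M *ᵥ y) = y ⬝ᵥ (M *ᵥ x) := by
  rw [dotProduct_mulVec_eq_transpose_mulVec_dotProduct, hM.eq, dotProduct_comm]

theorem dotProduct_mul_mul_transpose_mulVec [CommSemiring R] (P : Matrix ι κ R)
    (N : Matrix κ κ R) (v : ι → R) :
    v ⬝ᵥ ((P * N * Pᵀ) *ᵥ v) = (Pᵀ *ᵥ v) ⬝ᵥ (N *ᵥ (Pᵀ *ᵥ v)) := by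
  rw [← mulVec_mulVec, ← mulVec_mulVec, dotProduct_mulVec_eq_transpose_mulVec_dotProduct]

variable [DecidableEq ι] [DecidableEq κ]

theorem PosDef.mulVec_inv_mulVec {M : Matrix ι ι ℝ} (hM : M.PosDef) (x : ι → ℝ) :
    M *ᵥ (M⁻¹ *ᵥ x) = x := by
  rw [mulVec_mulVec, mul_nonsing_inv _ ((isUnit_iff_isUnit_det M).mp hM.isUnit), one_mulVec]

theorem PosDef.inv_mulVec_mulVec {M : Matrix ι ι ℝ} (hM : M.PosDef) (x : ι → ℝ) :
    M⁻¹ *ᵥ (M *ᵥ x) = x := by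
  rw [mulVec_mulVec, nonsing_inv_mul _ ((isUnit_iff_isUnit_det M).mp hM.isUnit), one_mulVec]

/-- Cauchy–Schwarz for the pair of dual norms `√(xᵀ M⁻¹ x)` and `√(yᵀ M y)`. -/
theorem PosDef.sq_dotProduct_le {M : Matrix ι ι ℝ} (hM : M.PosDef) (x y : ι → ℝ) :
    (x ⬝ᵥ y) ^ 2 ≤ (x ⬝ᵥ (M⁻¹ *ᵥ x)) * (y ⬝ᵥ (M *ᵥ y)) := by
  have hsymm : M.IsSymm := isHermitian_iff_isSymm.mp hM.isHermitian
  have hcs := (toBilin' M).apply_mul_apply_le_of_forall_zero_le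
    (fun z => by simpa [toBilin'_apply'] using hM.posSemidef.dotProduct_mulVec_nonneg z)
    (M⁻¹ *ᵥ x) y
  simp only [toBilin'_apply', hM.mulVec_inv_mulVec] at hcs
  rwa [hsymm.dotProduct_mulVec_comm, hM.mulVec_inv_mulVec, dotProduct_comm (M⁻¹ *ᵥ x),
    dotProduct_comm y, ← sq] at hcs

variable {A : Matrix ι ι ℝ} {tA : Matrix κ κ ℝ} {P : Matrix ι κ ℝ}

theorem PosDef.dotProduct_mul_inv_mul_transpose_mulVec_le (hA : A.PosDef) (htA : tA.PosDef)
    {cP : ℝ} (hcP : 0 ≤ cP)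
    (h1 : ∀ tv, (P *ᵥ tv) ⬝ᵥ (A *ᵥ (P *ᵥ tv)) ≤ cP * (tv ⬝ᵥ (tA *ᵥ tv))) (v : ι → ℝ) :
    v ⬝ᵥ ((P * tA⁻¹ * Pᵀ) *ᵥ v) ≤ cP * (v ⬝ᵥ (A⁻¹ *ᵥ v)) := by
  set s := v ⬝ᵥ ((P * tA⁻¹ * Pᵀ) *ᵥ v) with hs_def
  set w := tA⁻¹ *ᵥ (Pᵀ *ᵥ v) with hw_def
  have hs : s = v ⬝ᵥ (P *ᵥ w) := by
    rw [hs_def, dotProduct_mul_mul_transpose_mulVec,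
      dotProduct_mulVec_eq_transpose_mulVec_dotProduct P v]
  have hw : w ⬝ᵥ (tA *ᵥ w) = s := by
    rw [hw_def, htA.mulVec_inv_mulVec, dotProduct_comm, hs_def,
      dotProduct_mul_mul_transpose_mulVec]
  have hs0 : 0 ≤ s := by
    simpa [s, dotProduct_mul_mul_transpose_mulVec] using
      htA.inv.posSemidef.dotProduct_mulVec_nonneg (Pᵀ *ᵥ v)
  have hA0 : 0 ≤ v ⬝ᵥ (A⁻¹ *ᵥ v) := by
    simpa using hA.inv.posSemidef.dotProduct_mulVec_nonneg v
  refine le_mul_of_sq_le_mul_mul hs0 hA0 hcP ?_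
  calc s ^ 2 ≤ (v ⬝ᵥ (A⁻¹ *ᵥ v)) * ((P *ᵥ w) ⬝ᵥ (A *ᵥ (P *ᵥ w))) :=
        hs ▸ hA.sq_dotProduct_le _ _
    _ ≤ (v ⬝ᵥ (A⁻¹ *ᵥ v)) * (cP * s) := hw ▸ mul_le_mul_of_nonneg_left (h1 w) hA0

theorem PosDef.dotProduct_inv_mulVec_le (hA : A.PosDef) (htA : tA.PosDef)
    {cV : ℝ} (hcV : 0 ≤ cV)
    (h2 : ∀ v, ∃ tv, P *ᵥ tv = v ∧ tv ⬝ᵥ (tA *ᵥ tv) ≤ cV * (v ⬝ᵥ (A *ᵥ v))) (v : ι → ℝ) :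
    v ⬝ᵥ (A⁻¹ *ᵥ v) ≤ cV * (v ⬝ᵥ ((P * tA⁻¹ * Pᵀ) *ᵥ v)) := by
  set a := v ⬝ᵥ (A⁻¹ *ᵥ v)
  obtain ⟨tw, hPtw, htw⟩ := h2 (A⁻¹ *ᵥ v)
  have ha : a = (Pᵀ *ᵥ v) ⬝ᵥ tw := by
    rw [← dotProduct_mulVec_eq_transpose_mulVec_dotProduct, hPtw]
  rw [hA.mulVec_inv_mulVec, dotProduct_comm (A⁻¹ *ᵥ v)] at htw
  have ha0 : 0 ≤ a := by simpa using hA.inv.posSemidef.dotProduct_mulVec_nonneg v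
  have hs0 : 0 ≤ v ⬝ᵥ ((P * tA⁻¹ * Pᵀ) *ᵥ v) := by
    simpa [dotProduct_mul_mul_transpose_mulVec] using
      htA.inv.posSemidef.dotProduct_mulVec_nonneg (Pᵀ *ᵥ v)
  refine le_mul_of_sq_le_mul_mul ha0 hs0 hcV ?_
  calc a ^ 2 ≤ (v ⬝ᵥ ((P * tA⁻¹ * Pᵀ) *ᵥ v)) * (tw ⬝ᵥ (tA *ᵥ tw)) := by
        rw [ha, dotProduct_mul_mul_transpose_mulVec]; exact htA.sq_dotProduct_le _ _
    _ ≤ (v ⬝ᵥ ((P * tA⁻¹ * Pᵀ) *ᵥ v)) * (cV * a) := mul_le_mul_of_nonneg_left htw hs0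

theorem PosDef.exists_dotProduct_mulVec_eq_eigenvalue_mul {B : Matrix ι ι ℝ} (hA : A.PosDef)
    {μ : ℝ} (hμ : Module.End.HasEigenvalue (toLin' (B * A)) μ) :
    ∃ y, 0 < y ⬝ᵥ (A⁻¹ *ᵥ y) ∧ y ⬝ᵥ (B *ᵥ y) = μ * (y ⬝ᵥ (A⁻¹ *ᵥ y)) := by
  obtain ⟨x, hx⟩ := hμ.exists_hasEigenvector
  have hBAx : B *ᵥ (A *ᵥ x) = μ • x := by
    rw [mulVec_mulVec, ← toLin'_apply, hx.apply_eq_smul]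
  refine ⟨A *ᵥ x, ?_, ?_⟩
  · simpa [hA.inv_mulVec_mulVec, dotProduct_comm x] using hA.dotProduct_mulVec_pos hx.2
  · rw [hBAx, hA.inv_mulVec_mulVec, dotProduct_smul, smul_eq_mul]

theorem PosDef.eigenvalue_mul_le {B : Matrix ι ι ℝ} (hA : A.PosDef) {c μ : ℝ}
    (h : ∀ v, v ⬝ᵥ (B *ᵥ v) ≤ c * (v ⬝ᵥ (A⁻¹ *ᵥ v)))
    (hμ : Module.End.HasEigenvalue (toLin' (B * A)) μ) : μ ≤ c := by
  obtain ⟨y, hy, hμy⟩ := hA.exists_dotProduct_mulVec_eq_eigenvalue_mul hμ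
  exact le_of_mul_le_mul_right (hμy ▸ h y) hy

theorem PosDef.le_eigenvalue_mul {B : Matrix ι ι ℝ} (hA : A.PosDef) {c μ : ℝ}
    (h : ∀ v, c * (v ⬝ᵥ (A⁻¹ *ᵥ v)) ≤ v ⬝ᵥ (B *ᵥ v))
    (hμ : Module.End.HasEigenvalue (toLin' (B * A)) μ) : c ≤ μ := by
  obtain ⟨y, hy, hμy⟩ := hA.exists_dotProduct_mulVec_eq_eigenvalue_mul hμ
  exact le_of_mul_le_mul_right (hμy ▸ h y) hy

end Matrix

theorem fictitious_space_lemma_general (n m : ℕ)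
    (A : Matrix (Fin n) (Fin n) ℝ) (tA : Matrix (Fin m) (Fin m) ℝ)
    (P : Matrix (Fin n) (Fin m) ℝ)
    (hA : A.PosDef) (htA : tA.PosDef)
    (cP cV : ℝ) (hcP : 0 < cP) (hcV : 0 < cV)
    (h1 : ∀ tv : Fin m → ℝ, (P *ᵥ tv) ⬝ᵥ (A *ᵥ (P *ᵥ tv)) ≤ cP * (tv ⬝ᵥ (tA *ᵥ tv)))
    (h2 : ∀ v : Fin n → ℝ, ∃ tv : Fin m → ℝ,
      P *ᵥ tv = v ∧ tv ⬝ᵥ (tA *ᵥ tv) ≤ cV * (v ⬝ᵥ (A *ᵥ v))) :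
    (∀ v : Fin n → ℝ,
        (1 / cV) * (v ⬝ᵥ (A⁻¹ *ᵥ v)) ≤ v ⬝ᵥ ((P * tA⁻¹ * Pᵀ) *ᵥ v) ∧
          v ⬝ᵥ ((P * tA⁻¹ * Pᵀ) *ᵥ v) ≤ cP * (v ⬝ᵥ (A⁻¹ *ᵥ v))) ∧
      ∀ μ ν : ℝ,
        Module.End.HasEigenvalue (Matrix.toLin' ((P * tA⁻¹ * Pᵀ) * A)) μ →
        Module.End.HasEigenvalue (Matrix.toLin' ((P * tA⁻¹ * Pᵀ) * A)) ν →
        μ ≤ cP * cV * ν := by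
  have upper := hA.dotProduct_mul_inv_mul_transpose_mulVec_le htA hcP.le h1
  have lower : ∀ v, 1 / cV * (v ⬝ᵥ (A⁻¹ *ᵥ v)) ≤ v ⬝ᵥ ((P * tA⁻¹ * Pᵀ) *ᵥ v) := fun v => by
    rw [one_div_mul_eq_div, div_le_iff₀' hcV]
    exact hA.dotProduct_inv_mulVec_le htA hcV.le h2 v
  refine ⟨fun v => ⟨lower v, upper v⟩, fun μ ν hμ hν => ?_⟩
  calc μ ≤ cP := hA.eigenvalue_mul_le upper hμ
    _ = cP * cV * (1 / cV) := by field_simp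
    _ ≤ cP * cV * ν := by gcongr; exact hA.le_eigenvalue_mul lower hν

/-- **Fictitious Space Lemma** (matrix form).  Let `A` (n×n) and `tA` (m×m) be symmetric
positive definite real matrices and `P` an `n×m` matrix with `ṽ ↦ P ṽ` surjective onto
`ℝⁿ`.  If (i) `(Pṽ)ᵀ A (Pṽ) ≤ c_P ṽᵀ tA ṽ` for all `ṽ`, and (ii) every `v` admits a
lifting `ṽ` with `P ṽ = v` and `ṽᵀ tA ṽ ≤ c_V vᵀ A v`, then
`(1/c_V) vᵀ A⁻¹ v ≤ vᵀ (P tA⁻¹ Pᵀ) v ≤ c_P vᵀ A⁻¹ v`; in particular any two (real)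
eigenvalues `μ, ν` of `(P tA⁻¹ Pᵀ) A` satisfy `μ ≤ c_P c_V ν`, i.e. the spectral
condition number of `(P tA⁻¹ Pᵀ) A` is at most `c_P · c_V`. -/
theorem fictitious_space_lemma (n m : ℕ)
    (A : Matrix (Fin n) (Fin n) ℝ) (tA : Matrix (Fin m) (Fin m) ℝ)
    (P : Matrix (Fin n) (Fin m) ℝ)
    (hA : A.PosDef) (htA : tA.PosDef)
    (hsurj : Function.Surjective fun tv : Fin m → ℝ => P *ᵥ tv)
    (cP cV : ℝ) (hcP : 0 < cP) (hcV : 0 < cV)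
    (h1 : ∀ tv : Fin m → ℝ, (P *ᵥ tv) ⬝ᵥ (A *ᵥ (P *ᵥ tv)) ≤ cP * (tv ⬝ᵥ (tA *ᵥ tv)))
    (h2 : ∀ v : Fin n → ℝ, ∃ tv : Fin m → ℝ,
      P *ᵥ tv = v ∧ tv ⬝ᵥ (tA *ᵥ tv) ≤ cV * (v ⬝ᵥ (A *ᵥ v))) :
    (∀ v : Fin n → ℝ,
        (1 / cV) * (v ⬝ᵥ (A⁻¹ *ᵥ v)) ≤ v ⬝ᵥ ((P * tA⁻¹ * Pᵀ) *ᵥ v) ∧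
          v ⬝ᵥ ((P * tA⁻¹ * Pᵀ) *ᵥ v) ≤ cP * (v ⬝ᵥ (A⁻¹ *ᵥ v))) ∧
      ∀ μ ν : ℝ,
        Module.End.HasEigenvalue (Matrix.toLin' ((P * tA⁻¹ * Pᵀ) * A)) μ →
        Module.End.HasEigenvalue (Matrix.toLin' ((P * tA⁻¹ * Pᵀ) * A)) ν →
        μ ≤ cP * cV * ν :=
  fictitious_space_lemma_general n m A tA P hA htA cP cV hcP hcV h1 h2
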